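/- arXiv:1810.02619 — 7 statements merged into one kernel-verified Lean document; each statement's English description precedes it below -/
import Mathlib

section
/- Let H be a complex Hilbert space and A₁, …, Aₙ bounded positive operators on H. Then for any vectors x₁, …, xₙ ∈ H, ‖∑ⱼ Aⱼ xⱼ‖² ≤ ‖∑ⱼ Aⱼ‖ · ∑ⱼ re ⟨Aⱼ xⱼ, xⱼ⟩. -/
/-! Put `y = ∑ⱼ Aⱼ xⱼ`, so that `‖y‖² = ∑ⱼ re ⟪Aⱼ xⱼ, y⟫`. Cauchy–Schwarz for each positive
semidefinite form `⟪Aⱼ ·, ·⟫` and then for the finite sum bounds this by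
`(∑ⱼ re ⟪Aⱼ xⱼ, xⱼ⟫)^½ · (re ⟪(∑ⱼ Aⱼ) y, y⟫)^½ ≤ (∑ⱼ re ⟪Aⱼ xⱼ, xⱼ⟫)^½ · ‖∑ⱼ Aⱼ‖^½ · ‖y‖`. -/

section

open RCLike
open scoped InnerProductSpace

variable {𝕜 E : Type*} [RCLike 𝕜] [NormedAddCommGroup E] [InnerProductSpace 𝕜 E]

theorem LinearMap.IsPositive.norm_inner_sq_le {T : E →ₗ[𝕜] E} (hT : T.IsPositive) (u v : E) :
    ‖⟪T u, v⟫_𝕜‖ ^ 2 ≤ re ⟪T u, u⟫_𝕜 * re ⟪T v, v⟫_𝕜 := by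
  -- `(u, v) ↦ ⟪T u, v⟫` is a positive semidefinite sesquilinear form, so Cauchy–Schwarz applies.
  let form : PreInnerProductSpace.Core 𝕜 E :=
    { inner a b := ⟪T a, b⟫_𝕜
      conj_inner_symm a b := by simp only [inner_conj_symm, hT.isSymmetric a b]
      re_inner_nonneg := hT.re_inner_nonneg_left
      add_left a b c := by simp only [map_add, inner_add_left]
      smul_left a b r := by simp only [map_smul, inner_smul_left] }
  have h := InnerProductSpace.Core.inner_mul_inner_self_le (c := form) u v
  have hsymm : ‖⟪T v, u⟫_𝕜‖ = ‖⟪T u, v⟫_𝕜‖ := by rw [hT.isSymmetric, norm_inner_symm]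
  change ‖⟪T u, v⟫_𝕜‖ * ‖⟪T v, u⟫_𝕜‖ ≤ _ at h
  rwa [hsymm, ← sq] at h

theorem ContinuousLinearMap.re_inner_apply_self_le (T : E →L[𝕜] E) (x : E) :
    re ⟪T x, x⟫_𝕜 ≤ ‖T‖ * ‖x‖ ^ 2 :=
  calc re ⟪T x, x⟫_𝕜 ≤ ‖⟪T x, x⟫_𝕜‖ := re_le_norm _
    _ ≤ ‖T x‖ * ‖x‖ := norm_inner_le_norm _ _
    _ ≤ ‖T‖ * ‖x‖ * ‖x‖ := by gcongr; exact T.le_opNorm x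
    _ = ‖T‖ * ‖x‖ ^ 2 := by ring

theorem ContinuousLinearMap.norm_sum_apply_sq_le {ι : Type*} (s : Finset ι) {A : ι → E →L[𝕜] E}
    (hA : ∀ j ∈ s, (A j).IsPositive) (x : ι → E) :
    ‖∑ j ∈ s, A j (x j)‖ ^ 2 ≤ ‖∑ j ∈ s, A j‖ * ∑ j ∈ s, re ⟪A j (x j), x j⟫_𝕜 := by
  set y := ∑ j ∈ s, A j (x j)
  have hy : ‖y‖ ^ 2 ≤ ∑ j ∈ s, ‖⟪A j (x j), y⟫_𝕜‖ :=
    calc ‖y‖ ^ 2 = re ⟪y, y⟫_𝕜 := (inner_self_eq_norm_sq y).symm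
      _ = ∑ j ∈ s, re ⟪A j (x j), y⟫_𝕜 := by rw [sum_inner, map_sum]
      _ ≤ ∑ j ∈ s, ‖⟪A j (x j), y⟫_𝕜‖ := Finset.sum_le_sum fun j _ => re_le_norm _
  have hsum : (∑ j ∈ s, ‖⟪A j (x j), y⟫_𝕜‖) ^ 2 ≤
      (∑ j ∈ s, re ⟪A j (x j), x j⟫_𝕜) * ∑ j ∈ s, re ⟪A j y, y⟫_𝕜 :=
    Finset.sum_sq_le_sum_mul_sum_of_sq_le_mul s (fun j hj => (hA j hj).re_inner_nonneg_left _)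
      (fun j hj => (hA j hj).re_inner_nonneg_left _)
      (fun j hj => (hA j hj).toLinearMap.norm_inner_sq_le _ _)
  have hnorm : ∑ j ∈ s, re ⟪A j y, y⟫_𝕜 ≤ ‖∑ j ∈ s, A j‖ * ‖y‖ ^ 2 := by
    simpa only [_root_.sum_apply, sum_inner, map_sum] using
      (∑ j ∈ s, A j).re_inner_apply_self_le y
  have hS : 0 ≤ ∑ j ∈ s, re ⟪A j (x j), x j⟫_𝕜 :=
    Finset.sum_nonneg fun j hj => (hA j hj).re_inner_nonneg_left _
  have hy_sq : (‖y‖ ^ 2) ^ 2 ≤ (∑ j ∈ s, re ⟪A j (x j), x j⟫_𝕜) * (‖∑ j ∈ s, A j‖ * ‖y‖ ^ 2) :=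
    (pow_le_pow_left₀ (by positivity) hy 2).trans (hsum.trans (by gcongr))
  obtain hy0 | hy0 := (sq_nonneg ‖y‖).eq_or_lt
  · rw [← hy0]
    exact mul_nonneg (norm_nonneg _) hS
  · exact le_of_mul_le_mul_right (by linear_combination hy_sq) hy0

end

open scoped ComplexInnerProductSpace

theorem stmt1_general {H : Type*} [NormedAddCommGroup H] [InnerProductSpace ℂ H]
    (n : ℕ) (A : Fin n → (H →L[ℂ] H))
    (hpos : ∀ j, ∀ x : H, (⟪A j x, x⟫).im = 0 ∧ 0 ≤ (⟪A j x, x⟫).re)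
    (x : Fin n → H) :
    ‖∑ j, A j (x j)‖ ^ 2 ≤ ‖∑ j, A j‖ * ∑ j, (⟪A j (x j), x j⟫).re := by
  have hA : ∀ j ∈ Finset.univ, (A j).IsPositive := fun j _ =>
    (ContinuousLinearMap.isPositive_iff_complex _).2 fun z =>
      ⟨Complex.ext rfl (hpos j z).1.symm, (hpos j z).2⟩
  exact ContinuousLinearMap.norm_sum_apply_sq_le Finset.univ hA x

/-- Generalized Schwarz inequality for finitely many bounded positive operators
on a complex Hilbert space. -/
theorem stmt1 {H : Type*} [NormedAddCommGroup H] [InnerProductSpace ℂ H] [CompleteSpace H]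
    (n : ℕ) (A : Fin n → (H →L[ℂ] H))
    (hpos : ∀ j, ∀ x : H, (⟪A j x, x⟫).im = 0 ∧ 0 ≤ (⟪A j x, x⟫).re)
    (x : Fin n → H) :
    ‖∑ j, A j (x j)‖ ^ 2 ≤ ‖∑ j, A j‖ * ∑ j, (⟪A j (x j), x j⟫).re :=
  stmt1_general n A hpos x
end

section
/- Let H be a complex Hilbert space and A : D → H a linear map on a subspace D ⊆ H satisfying |⟨A x, y⟩|² ≤ M_y · ⟨A x, x⟩ for every y ∈ H and all x ∈ D (with ⟨A x, x⟩ real ≥ 0), where M_y ≥ 0 depends on y. Then the sesquilinear form on the range of A given by ⟨A x, A x'⟩_A := ⟨A x, x'⟩ is well defined (independent of the representatives x, x') and is a positive definite inner product on ran A. -/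
open scoped ComplexInnerProductSpace

/-!
Taking `y = A x` in the domination condition gives `‖A x‖⁴ ≤ M_{A x} ⟨A x, x⟩`, which yields
positive definiteness and also `Re ⟨A x, x⟩ ≥ 0` for every `x`. For such an accretive map the
kernel is orthogonal to the range: if `A z = 0`, then
`t ↦ Re ⟨A (z + t u), z + t u⟩ = t Re ⟨A u, z⟩ + t² Re ⟨A u, u⟩` is a nonnegative quadratic
without constant term, so its linear coefficient vanishes, and replacing `u` by `I • u` kills
the imaginary part. Well-definedness follows, since changing `y` within its class changes
`⟨A x, y⟩` by some `⟨A x, z⟩` with `A z = 0`.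
-/

section

variable {H : Type*} [NormedAddCommGroup H] [InnerProductSpace ℂ H]

theorem eq_zero_of_norm_inner_self_sq_le_of_nonpos {v : H} {c : ℝ}
    (h : ‖⟪v, v⟫‖ ^ 2 ≤ c) (hc : c ≤ 0) : v = 0 := by
  rw [← inner_self_re_eq_norm, inner_self_eq_norm_sq, ← pow_mul] at h
  exact norm_eq_zero.mp <| (pow_eq_zero_iff (by norm_num)).mp <|
    le_antisymm (h.trans hc) (by positivity)

namespace LinearMap

variable {D : Submodule ℂ H} {A : D →ₗ[ℂ] H}

theorem re_inner_apply_self_nonneg {x : D} {M : ℝ} (hM : 0 ≤ M)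
    (h : ‖⟪A x, A x⟫‖ ^ 2 ≤ M * (⟪A x, (x : H)⟫).re) : 0 ≤ (⟪A x, (x : H)⟫).re := by
  by_contra! hneg
  have hAx :=
    eq_zero_of_norm_inner_self_sq_le_of_nonpos h (mul_nonpos_of_nonneg_of_nonpos hM hneg.le)
  simp [hAx] at hneg

theorem re_inner_apply_eq_zero_of_apply_eq_zero
    (hA : ∀ x : D, 0 ≤ (⟪A x, (x : H)⟫).re) {z : D} (hz : A z = 0) (u : D) :
    (⟪A u, (z : H)⟫).re = 0 := by
  have hquad : ∀ t : ℝ,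
      0 ≤ (⟪A u, (u : H)⟫).re * (t * t) + (⟪A u, (z : H)⟫).re * t + 0 := by
    intro t
    have := hA (z + (t : ℂ) • u)
    simp only [map_add, map_smul, hz, zero_add, Submodule.coe_add, Submodule.coe_smul,
      inner_add_right, inner_smul_left, inner_smul_right, Complex.conj_ofReal] at this
    simpa [Complex.add_re, Complex.mul_re, mul_comm, mul_assoc, add_comm] using this
  have hdisc := discrim_le_zero hquad
  rw [discrim, mul_zero, sub_zero] at hdisc
  exact (pow_eq_zero_iff two_ne_zero).mp (le_antisymm hdisc (sq_nonneg _))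

theorem inner_apply_eq_zero_of_apply_eq_zero
    (hA : ∀ x : D, 0 ≤ (⟪A x, (x : H)⟫).re) {z : D} (hz : A z = 0) (u : D) :
    ⟪A u, (z : H)⟫ = 0 := by
  have hre := re_inner_apply_eq_zero_of_apply_eq_zero hA hz u
  have him := re_inner_apply_eq_zero_of_apply_eq_zero hA hz (Complex.I • u)
  rw [map_smul, inner_smul_left, Complex.conj_I] at him
  exact Complex.ext hre (by simpa using him)

theorem inner_apply_congr (hA : ∀ x : D, 0 ≤ (⟪A x, (x : H)⟫).re) {x x' y y' : D}
    (hx : A x = A x') (hy : A y = A y') : ⟪A x, (y : H)⟫ = ⟪A x', (y' : H)⟫ := by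
  have hker := inner_apply_eq_zero_of_apply_eq_zero hA (z := y - y')
    (by rw [map_sub, hy, sub_self]) x'
  rw [hx]
  rwa [Submodule.coe_sub, inner_sub_right, sub_eq_zero] at hker

end LinearMap

end

theorem stmt5_general {H : Type*} [NormedAddCommGroup H] [InnerProductSpace ℂ H]
    (D : Submodule ℂ H) (A : D →ₗ[ℂ] H)
    (hM : ∀ y : H, ∃ My : ℝ, 0 ≤ My ∧
      ∀ x : D, ‖⟪A x, y⟫‖ ^ 2 ≤ My * (⟪A x, (x : H)⟫).re) :
    (∀ x x' y y' : D, A x = A x' → A y = A y' → ⟪A x, (y : H)⟫ = ⟪A x', (y' : H)⟫) ∧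
    (∀ x : D, (⟪A x, (x : H)⟫).re = 0 → A x = 0) := by
  have hA : ∀ x : D, 0 ≤ (⟪A x, (x : H)⟫).re := fun x ↦ by
    obtain ⟨M, hM0, h⟩ := hM (A x)
    exact LinearMap.re_inner_apply_self_nonneg hM0 (h x)
  refine ⟨fun x x' y y' ↦ LinearMap.inner_apply_congr hA, fun x hx ↦ ?_⟩
  obtain ⟨M, -, h⟩ := hM (A x)
  exact eq_zero_of_norm_inner_self_sq_le_of_nonpos (h x) (by rw [hx, mul_zero])

/-- Under the domination condition `|⟨A x, y⟩|² ≤ M_y ⟨A x, x⟩`, the sesquilinear form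
`⟨A x, A x'⟩_A := ⟨A x, x'⟩` on `ran A` is well defined and positive definite. -/
theorem stmt5 {H : Type*} [NormedAddCommGroup H] [InnerProductSpace ℂ H] [CompleteSpace H]
    (D : Submodule ℂ H) (A : D →ₗ[ℂ] H)
    (hreal : ∀ x : D, (⟪A x, (x : H)⟫).im = 0 ∧ 0 ≤ (⟪A x, (x : H)⟫).re)
    (hM : ∀ y : H, ∃ My : ℝ, 0 ≤ My ∧
      ∀ x : D, ‖⟪A x, y⟫‖ ^ 2 ≤ My * (⟪A x, (x : H)⟫).re) :
    (∀ x x' y y' : D, A x = A x' → A y = A y' → ⟪A x, (y : H)⟫ = ⟪A x', (y' : H)⟫) ∧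
    (∀ x : D, (⟪A x, (x : H)⟫).re = 0 → A x = 0) :=
  stmt5_general D A hM
end

section
/- Let H be a complex Hilbert space, D ⊆ H a subspace, and A : D → H a linear operator admitting bounded positive extensions. Among all bounded positive extensions à of A there is a smallest one A_N (the Krein–von Neumann extension): A_N ≤ à for every bounded positive extension Ã, where B ≤ C means ⟨(C−B)x, x⟩ ≥ 0 for all x. Moreover its quadratic form is ⟨A_N y, y⟩ = sup { |⟨A x, y⟩|² : x ∈ D, ⟨A x, x⟩ ≤ 1 } for every y ∈ H. -/
/-!
Fix one positive extension `B` of `A` and put `S = √B`, so that `⟪B x, y⟫ = ⟪S x, S y⟫`.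
With `P` the orthogonal projection onto the closure of `S D`, the operator `A_N = S P S` agrees
with `B` on `D`, and its form `⟪A_N y, y⟫ = ‖P S y‖²` is the supremum of `|⟪S x, P S y⟫|²` over
`x ∈ D` with `‖S x‖ ≤ 1`, because `S D` is dense in the range of `P`; this is the stated formula.
Any other positive extension `T` dominates each term of that supremum by the Cauchy–Schwarz
inequality for the positive form `⟪T ·, ·⟫`, hence `A_N ≤ T`.
-/

open scoped ComplexInnerProductSpace

/-- A bounded operator `T` on a complex Hilbert space is positive if its quadratic form
is real and nonnegative. -/
def IsPosOp {H : Type*} [NormedAddCommGroup H] [InnerProductSpace ℂ H]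
    (T : H →L[ℂ] H) : Prop :=
  ∀ x : H, (⟪T x, x⟫).im = 0 ∧ 0 ≤ (⟪T x, x⟫).re

section

variable {𝕜 E : Type*} [RCLike 𝕜] [NormedAddCommGroup E] [InnerProductSpace 𝕜 E]

open scoped InnerProductSpace

theorem sSup_norm_inner_sq_eq_norm_sq {K : Submodule 𝕜 E} {w : E}
    (hw : w ∈ K.topologicalClosure) :
    sSup {r : ℝ | ∃ u ∈ K, ‖u‖ ≤ 1 ∧ r = ‖⟪u, w⟫_𝕜‖ ^ 2} = ‖w‖ ^ 2 := by
  set s := {r : ℝ | ∃ u ∈ K, ‖u‖ ≤ 1 ∧ r = ‖⟪u, w⟫_𝕜‖ ^ 2}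
  have hs_le : ∀ r ∈ s, r ≤ ‖w‖ ^ 2 := by
    rintro _ ⟨u, -, hu, rfl⟩
    gcongr
    calc ‖⟪u, w⟫_𝕜‖ ≤ ‖u‖ * ‖w‖ := norm_inner_le_norm u w
      _ ≤ ‖w‖ := mul_le_of_le_one_left (norm_nonneg w) hu
  have hs_bdd : BddAbove s := ⟨_, hs_le⟩
  have hs_zero : (0 : ℝ) ∈ s := ⟨0, K.zero_mem, by simp, by simp⟩
  refine le_antisymm (csSup_le ⟨0, hs_zero⟩ hs_le) ?_
  rcases eq_or_ne w 0 with rfl | hw0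
  · simpa using le_csSup hs_bdd hs_zero
  -- normalised approximants of `w` from `K` realise the supremum in the limit
  let f : E → ℝ := fun u => ‖⟪((‖u‖⁻¹ : ℝ) : 𝕜) • u, w⟫_𝕜‖ ^ 2
  have hf_mem : ∀ u ∈ K, f u ∈ s := fun u hu => by
    refine ⟨_, K.smul_mem _ hu, ?_, rfl⟩
    rw [norm_smul, RCLike.norm_ofReal, abs_inv, abs_norm]
    exact inv_mul_le_one_of_le₀ le_rfl (norm_nonneg u)
  have hf_cont : ContinuousAt f w := by
    have : ContinuousAt (fun u : E => ‖u‖⁻¹) w :=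
      continuous_norm.continuousAt.inv₀ (norm_ne_zero_iff.mpr hw0)
    fun_prop
  have hfw : f w = ‖w‖ ^ 2 := by
    simp only [f, inner_smul_left, inner_self_eq_norm_sq_to_K, norm_mul, RCLike.norm_conj,
      map_inv₀, norm_inv, norm_algebraMap', norm_norm, norm_pow]
    field_simp
  have := mem_closure_iff_nhdsWithin_neBot.mp hw
  calc ‖w‖ ^ 2 = f w := hfw.symm
    _ ≤ sSup s := le_of_tendsto (hf_cont.tendsto.mono_left nhdsWithin_le_nhds)
        (eventually_nhdsWithin_of_forall fun u hu => le_csSup hs_bdd (hf_mem u hu))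

end

theorem isPosOp_iff_nonneg {H : Type*} [NormedAddCommGroup H] [InnerProductSpace ℂ H]
    (T : H →L[ℂ] H) : IsPosOp T ↔ 0 ≤ T := by
  rw [ContinuousLinearMap.nonneg_iff_isPositive, ContinuousLinearMap.isPositive_iff_complex]
  refine forall_congr' fun x => and_congr ?_ Iff.rfl
  rw [Complex.ext_iff]
  simp [eq_comm]

namespace ContinuousLinearMap

variable {H : Type*} [NormedAddCommGroup H] [InnerProductSpace ℂ H] [CompleteSpace H]
  {B : H →L[ℂ] H}

theorem sqrt_apply_sqrt_apply (hB : 0 ≤ B) (x : H) : CFC.sqrt B (CFC.sqrt B x) = B x :=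
  DFunLike.congr_fun (CFC.sqrt_mul_sqrt_self B hB) x

theorem inner_eq_inner_sqrt (hB : 0 ≤ B) (x y : H) :
    ⟪B x, y⟫ = ⟪CFC.sqrt B x, CFC.sqrt B y⟫ := by
  rw [← sqrt_apply_sqrt_apply hB]
  exact ((nonneg_iff_isPositive _).mp (CFC.sqrt_nonneg B)).inner_left_eq_inner_right _ _

theorem re_inner_self_eq_norm_sqrt_sq (hB : 0 ≤ B) (x : H) :
    (⟪B x, x⟫).re = ‖CFC.sqrt B x‖ ^ 2 := by
  rw [inner_eq_inner_sqrt hB]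
  exact inner_self_eq_norm_sq (𝕜 := ℂ) _

theorem norm_inner_sq_le_of_nonneg (hB : 0 ≤ B) (x y : H) :
    ‖⟪B x, y⟫‖ ^ 2 ≤ (⟪B x, x⟫).re * (⟪B y, y⟫).re := by
  rw [re_inner_self_eq_norm_sqrt_sq hB, re_inner_self_eq_norm_sqrt_sq hB, inner_eq_inner_sqrt hB,
    ← mul_pow]
  gcongr
  exact norm_inner_le_norm _ _

noncomputable abbrev closureMapSqrt (D : Submodule ℂ H) (B : H →L[ℂ] H) : Submodule ℂ H :=
  (D.map ((CFC.sqrt B : H →L[ℂ] H) : H →ₗ[ℂ] H)).topologicalClosure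

noncomputable def kreinVonNeumann (D : Submodule ℂ H) (B : H →L[ℂ] H) : H →L[ℂ] H :=
  CFC.sqrt B ∘L (closureMapSqrt D B).starProjection ∘L CFC.sqrt B

theorem inner_kreinVonNeumann_self (D : Submodule ℂ H) (y : H) :
    ⟪kreinVonNeumann D B y, y⟫ =
      ((‖(closureMapSqrt D B).starProjection (CFC.sqrt B y)‖ ^ 2 : ℝ) : ℂ) := by
  set K := closureMapSqrt D B
  set v := CFC.sqrt B y
  have hS := (nonneg_iff_isPositive _).mp (CFC.sqrt_nonneg B)
  have hP : ⟪K.starProjection v, v⟫ = ⟪K.starProjection v, K.starProjection v⟫ := by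
    rw [← K.inner_starProjection_left_eq_right,
      K.starProjection_eq_self_iff.mpr (K.starProjection_apply_mem v)]
  rw [kreinVonNeumann, comp_apply, comp_apply, hS.inner_left_eq_inner_right, hP,
    inner_self_eq_norm_sq_to_K]
  norm_cast

theorem kreinVonNeumann_nonneg (D : Submodule ℂ H) : 0 ≤ kreinVonNeumann D B := by
  rw [← isPosOp_iff_nonneg]
  intro y
  rw [inner_kreinVonNeumann_self, Complex.ofReal_im, Complex.ofReal_re]
  exact ⟨rfl, sq_nonneg _⟩

variable {D : Submodule ℂ H}

theorem starProjection_sqrt_apply_of_mem {x : H} (hx : x ∈ D) :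
    (closureMapSqrt D B).starProjection (CFC.sqrt B x) = CFC.sqrt B x :=
  Submodule.starProjection_eq_self_iff.mpr
    (Submodule.le_topologicalClosure _ (Submodule.mem_map_of_mem hx))

theorem kreinVonNeumann_apply_of_mem (hB : 0 ≤ B) {x : H} (hx : x ∈ D) :
    kreinVonNeumann D B x = B x := by
  rw [kreinVonNeumann, comp_apply, comp_apply, starProjection_sqrt_apply_of_mem hx,
    sqrt_apply_sqrt_apply hB]

theorem re_inner_kreinVonNeumann_self_eq_sSup (hB : 0 ≤ B) (y : H) :
    (⟪kreinVonNeumann D B y, y⟫).re =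
      sSup {r : ℝ | ∃ x : D, (⟪B x, (x : H)⟫).re ≤ 1 ∧ r = ‖⟪B x, y⟫‖ ^ 2} := by
  set P := (closureMapSqrt D B).starProjection
  have hB_inner : ∀ x ∈ D, ⟪B x, y⟫ = ⟪CFC.sqrt B x, P (CFC.sqrt B y)⟫ := fun x hx => by
    rw [inner_eq_inner_sqrt hB, ← Submodule.inner_starProjection_left_eq_right,
      starProjection_sqrt_apply_of_mem hx]
  rw [inner_kreinVonNeumann_self, Complex.ofReal_re,
    ← sSup_norm_inner_sq_eq_norm_sq ((closureMapSqrt D B).starProjection_apply_mem _)]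
  congr 1
  ext r
  constructor
  · rintro ⟨_, ⟨x, hx, rfl⟩, hx1, rfl⟩
    refine ⟨⟨x, hx⟩, ?_, by rw [hB_inner x hx]; rfl⟩
    exact (re_inner_self_eq_norm_sqrt_sq hB x).trans_le ((sq_le_one_iff₀ (norm_nonneg _)).mpr hx1)
  · rintro ⟨⟨x, hx⟩, hx1, rfl⟩
    refine ⟨_, Submodule.mem_map_of_mem hx, ?_, by rw [hB_inner x hx]; rfl⟩
    rw [← sq_le_one_iff₀ (norm_nonneg _)]
    exact (re_inner_self_eq_norm_sqrt_sq hB x).symm.trans_le hx1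

theorem kreinVonNeumann_le (hB : 0 ≤ B) {T : H →L[ℂ] H} (hT : 0 ≤ T)
    (hTB : ∀ x ∈ D, T x = B x) : kreinVonNeumann D B ≤ T := by
  rw [← sub_nonneg, ← isPosOp_iff_nonneg]
  intro y
  have hTy := (isPosOp_iff_nonneg T).mpr hT y
  have hle : (⟪kreinVonNeumann D B y, y⟫).re ≤ (⟪T y, y⟫).re := by
    rw [re_inner_kreinVonNeumann_self_eq_sSup hB]
    refine csSup_le ⟨0, 0, by simp, by simp⟩ ?_
    rintro _ ⟨⟨x, hx⟩, hx1, rfl⟩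
    rw [← hTB x hx] at hx1 ⊢
    calc ‖⟪T x, y⟫‖ ^ 2 ≤ (⟪T x, x⟫).re * (⟪T y, y⟫).re := norm_inner_sq_le_of_nonneg hT x y
      _ ≤ (⟪T y, y⟫).re := mul_le_of_le_one_left hTy.2 hx1
  have him : (⟪kreinVonNeumann D B y, y⟫).im = 0 := by
    rw [inner_kreinVonNeumann_self, Complex.ofReal_im]
  rw [sub_apply, inner_sub_left, Complex.sub_im, Complex.sub_re, hTy.1, him, sub_self]
  exact ⟨rfl, sub_nonneg.mpr hle⟩

end ContinuousLinearMap

open ContinuousLinearMap in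
theorem stmt8_general {H : Type*} [NormedAddCommGroup H] [InnerProductSpace ℂ H] [CompleteSpace H]
    (D : Submodule ℂ H) (A : D →ₗ[ℂ] H)
    (hexists : ∃ Atil : H →L[ℂ] H, IsPosOp Atil ∧ ∀ x : D, Atil x = A x) :
    ∃ AN : H →L[ℂ] H, IsPosOp AN ∧ (∀ x : D, AN x = A x) ∧
      (∀ Atil : H →L[ℂ] H, IsPosOp Atil → (∀ x : D, Atil x = A x) → IsPosOp (Atil - AN)) ∧
      (∀ y : H, (⟪AN y, y⟫).re =
        sSup {r : ℝ | ∃ x : D, (⟪A x, (x : H)⟫).re ≤ 1 ∧ r = ‖⟪A x, y⟫‖ ^ 2}) := by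
  obtain ⟨B, hB, hBA⟩ := hexists
  rw [isPosOp_iff_nonneg] at hB
  refine ⟨kreinVonNeumann D B, (isPosOp_iff_nonneg _).mpr (kreinVonNeumann_nonneg D),
    fun x => (kreinVonNeumann_apply_of_mem hB x.2).trans (hBA x), fun T hT hTA => ?_,
    fun y => ?_⟩
  · rw [isPosOp_iff_nonneg, sub_nonneg]
    exact kreinVonNeumann_le hB ((isPosOp_iff_nonneg T).mp hT)
      fun x hx => (hTA ⟨x, hx⟩).trans (hBA ⟨x, hx⟩).symm
  · simp only [← hBA]
    exact re_inner_kreinVonNeumann_self_eq_sSup hB y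

/-- Existence of the minimal (Krein–von Neumann) bounded positive extension, together with
the explicit formula for its quadratic form. -/
theorem stmt8 {H : Type*} [NormedAddCommGroup H] [InnerProductSpace ℂ H] [CompleteSpace H]
    (D : Submodule ℂ H) (A : D →ₗ[ℂ] H)
    (hform : ∀ x : D, (⟪A x, (x : H)⟫).im = 0 ∧ 0 ≤ (⟪A x, (x : H)⟫).re)
    (hexists : ∃ Atil : H →L[ℂ] H, IsPosOp Atil ∧ ∀ x : D, Atil x = A x) :
    ∃ AN : H →L[ℂ] H, IsPosOp AN ∧ (∀ x : D, AN x = A x) ∧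
      (∀ Atil : H →L[ℂ] H, IsPosOp Atil → (∀ x : D, Atil x = A x) → IsPosOp (Atil - AN)) ∧
      (∀ y : H, (⟪AN y, y⟫).re =
        sSup {r : ℝ | ∃ x : D, (⟪A x, (x : H)⟫).re ≤ 1 ∧ r = ‖⟪A x, y⟫‖ ^ 2}) :=
  stmt8_general D A hexists
end

section
/- Let H be a complex Hilbert space, D ⊆ H a subspace, A : D → H admitting bounded positive extensions, and A_N its minimal (Krein–von Neumann) positive extension. Then ‖A_N‖ = inf { M ≥ 0 : ‖A x‖² ≤ M · ⟨A x, x⟩ for all x ∈ D }. -/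
/-
Write `S = √A_N`. If `‖A x‖² ≤ M ⟨A x, x⟩` on `D`, then `‖S u‖² ≤ M ‖u‖²` on the closure `K` of
`S D`, and `S P_K S` is a positive extension of `A`, so minimality gives `‖S y‖ ≤ ‖P_K S y‖`,
i.e. `S H ⊆ K`. Hence `‖A_N y‖² ≤ M ⟨A_N y, y⟩` on all of `H`, which forces `‖A_N‖ ≤ M`;
conversely `M = ‖A_N‖` is admissible because `‖S (S y)‖ ≤ ‖S‖ ‖S y‖` and `‖S‖² = ‖A_N‖`.
-/

open scoped ComplexInnerProductSpace

theorem isPosOp_iff_isPositive {H : Type*} [NormedAddCommGroup H] [InnerProductSpace ℂ H]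
    (T : H →L[ℂ] H) : IsPosOp T ↔ T.IsPositive := by
  rw [ContinuousLinearMap.isPositive_iff_complex]
  refine forall_congr' fun x => and_congr_left fun _ => ?_
  constructor
  · intro h
    exact Complex.ext rfl (by simp [h])
  · intro h
    simpa using (congrArg Complex.im h).symm

namespace ContinuousLinearMap

theorem opNorm_le_of_norm_apply_sq_le {𝕜 E : Type*} [RCLike 𝕜] [NormedAddCommGroup E]
    [InnerProductSpace 𝕜 E] {T : E →L[𝕜] E} {M : ℝ} (hM : 0 ≤ M)
    (h : ∀ y, ‖T y‖ ^ 2 ≤ M * RCLike.re (inner 𝕜 (T y) y)) : ‖T‖ ≤ M := by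
  refine opNorm_le_bound T hM fun y => ?_
  have : ‖T y‖ * ‖T y‖ ≤ M * ‖y‖ * ‖T y‖ := calc
    ‖T y‖ * ‖T y‖ ≤ M * RCLike.re (inner 𝕜 (T y) y) := by rw [← sq]; exact h y
    _ ≤ M * (‖T y‖ * ‖y‖) :=
      mul_le_mul_of_nonneg_left ((RCLike.re_le_norm _).trans (norm_inner_le_norm _ _)) hM
    _ = M * ‖y‖ * ‖T y‖ := by ring
  rcases (norm_nonneg (T y)).eq_or_lt with h0 | hpos
  · rw [← h0]; positivity
  · exact le_of_mul_le_mul_right this hpos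

variable {H : Type*} [NormedAddCommGroup H] [InnerProductSpace ℂ H] [CompleteSpace H]

namespace IsPositive

variable {T : H →L[ℂ] H}

theorem sqrt_apply_sqrt_apply (hT : T.IsPositive) (y : H) : CFC.sqrt T (CFC.sqrt T y) = T y := by
  show (CFC.sqrt T * CFC.sqrt T) y = T y
  rw [CFC.sqrt_mul_sqrt_self T ((nonneg_iff_isPositive T).2 hT)]

theorem re_inner_apply_self (hT : T.IsPositive) (y : H) :
    (⟪T y, y⟫).re = ‖CFC.sqrt T y‖ ^ 2 := by
  rw [← hT.sqrt_apply_sqrt_apply, ← adjoint_inner_right,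
    (IsSelfAdjoint.of_nonneg (CFC.sqrt_nonneg T)).adjoint_eq, inner_self_eq_norm_sq_to_K]
  norm_cast

theorem norm_sqrt_sq (hT : T.IsPositive) : ‖CFC.sqrt T‖ ^ 2 = ‖T‖ := by
  rw [CFC.norm_sqrt T ((nonneg_iff_isPositive T).2 hT), Real.sq_sqrt (norm_nonneg T)]

theorem norm_apply_sq_le (hT : T.IsPositive) (y : H) : ‖T y‖ ^ 2 ≤ ‖T‖ * (⟪T y, y⟫).re := by
  rw [hT.re_inner_apply_self, ← hT.sqrt_apply_sqrt_apply, ← hT.norm_sqrt_sq, ← mul_pow]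
  gcongr
  exact (CFC.sqrt T).le_opNorm _

theorem isLeast_opNorm (hT : T.IsPositive) :
    IsLeast {M : ℝ | 0 ≤ M ∧ ∀ y, ‖T y‖ ^ 2 ≤ M * (⟪T y, y⟫).re} ‖T‖ :=
  ⟨⟨norm_nonneg T, hT.norm_apply_sq_le⟩, fun _ hM => opNorm_le_of_norm_apply_sq_le hM.1 hM.2⟩

end IsPositive

end ContinuousLinearMap

section KreinVonNeumann

open ContinuousLinearMap

variable {H : Type*} [NormedAddCommGroup H] [InnerProductSpace ℂ H] [CompleteSpace H]
  {D : Submodule ℂ H}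

structure IsMinimalPositiveExtension (A : D →ₗ[ℂ] H) (AN : H →L[ℂ] H) : Prop where
  isPositive : AN.IsPositive
  apply_eq : ∀ x : D, AN x = A x
  isPositive_sub : ∀ B : H →L[ℂ] H, B.IsPositive → (∀ x : D, B x = A x) → (B - AN).IsPositive

namespace IsMinimalPositiveExtension

variable {A : D →ₗ[ℂ] H} {AN : H →L[ℂ] H}

/-- Any closed subspace containing `√A_N D` contains the whole range of `√A_N`: otherwise
`√A_N P_K √A_N` would be a positive extension of `A` not dominating `A_N`. -/
theorem sqrt_apply_mem (h : IsMinimalPositiveExtension A AN) {K : Submodule ℂ H}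
    [K.HasOrthogonalProjection] (hK : ∀ x : D, CFC.sqrt AN x ∈ K) (y : H) :
    CFC.sqrt AN y ∈ K := by
  set S := CFC.sqrt AN
  have hS : adjoint S = S := (IsSelfAdjoint.of_nonneg (CFC.sqrt_nonneg AN)).adjoint_eq
  set B := S ∘L K.starProjection ∘L adjoint S
  have hB : B.IsPositive :=
    (IsPositive.of_isStarProjection isStarProjection_starProjection).conj_adjoint S
  have hBA : ∀ x : D, B x = A x := fun x => by
    simp only [B, comp_apply, hS, K.starProjection_eq_self_iff.2 (hK x)]
    exact (h.isPositive.sqrt_apply_sqrt_apply x).trans (h.apply_eq x)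
  have hBform : (⟪B y, y⟫).re = ‖K.starProjection (S y)‖ ^ 2 := by
    rw [← RCLike.re_to_complex, comp_apply, comp_apply, ← adjoint_inner_right, hS,
      K.re_inner_starProjection_eq_normSq, K.starProjection_apply, Submodule.coe_norm]
  have hle : ‖S y‖ ^ 2 ≤ ‖K.starProjection (S y)‖ ^ 2 := by
    have := (h.isPositive_sub B hB hBA).re_inner_nonneg_left y
    rwa [sub_apply, inner_sub_left, RCLike.re_to_complex, Complex.sub_re, sub_nonneg, hBform,
      h.isPositive.re_inner_apply_self] at this
  exact (K.mem_iff_norm_starProjection _).2 <| le_antisymm (K.norm_starProjection_apply_le _)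
    (pow_le_pow_iff_left₀ (norm_nonneg _) (norm_nonneg _) two_ne_zero |>.1 hle)

theorem norm_apply_sq_le (h : IsMinimalPositiveExtension A AN) {M : ℝ}
    (hM : ∀ x : D, ‖A x‖ ^ 2 ≤ M * (⟪A x, (x : H)⟫).re) (y : H) :
    ‖AN y‖ ^ 2 ≤ M * (⟪AN y, y⟫).re := by
  set S := CFC.sqrt AN
  set K := (D.map (S : H →ₗ[ℂ] H)).topologicalClosure
  have hDK : ∀ x : D, S x ∈ K := fun x => Submodule.le_topologicalClosure _ ⟨x, x.2, rfl⟩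
  have hbound : ∀ u ∈ K, ‖S u‖ ^ 2 ≤ M * ‖u‖ ^ 2 := by
    intro u hu
    rw [← SetLike.mem_coe, Submodule.topologicalClosure_coe] at hu
    have hclosed : IsClosed {u : H | ‖S u‖ ^ 2 ≤ M * ‖u‖ ^ 2} :=
      isClosed_le (by fun_prop) (by fun_prop)
    refine closure_minimal ?_ hclosed hu
    rintro _ ⟨x, hx, rfl⟩
    have := hM ⟨x, hx⟩
    rwa [← h.apply_eq, h.isPositive.re_inner_apply_self,
      ← h.isPositive.sqrt_apply_sqrt_apply] at this
  rw [h.isPositive.re_inner_apply_self, ← h.isPositive.sqrt_apply_sqrt_apply]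
  exact hbound _ (h.sqrt_apply_mem hDK y)

end IsMinimalPositiveExtension

end KreinVonNeumann

/-- The norm of the Krein–von Neumann extension `A_N` is the optimal constant in the
inequality `‖A x‖² ≤ M ⟨A x, x⟩`. -/
theorem stmt9 {H : Type*} [NormedAddCommGroup H] [InnerProductSpace ℂ H] [CompleteSpace H]
    (D : Submodule ℂ H) (A : D →ₗ[ℂ] H) (AN : H →L[ℂ] H)
    (hANpos : IsPosOp AN) (hANext : ∀ x : D, AN x = A x)
    (hANmin : ∀ Atil : H →L[ℂ] H, IsPosOp Atil → (∀ x : D, Atil x = A x) →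
      IsPosOp (Atil - AN)) :
    ‖AN‖ = sInf {M : ℝ | 0 ≤ M ∧ ∀ x : D, ‖A x‖ ^ 2 ≤ M * (⟪A x, (x : H)⟫).re} := by
  simp only [isPosOp_iff_isPositive] at hANpos hANmin
  have h : IsMinimalPositiveExtension A AN := ⟨hANpos, hANext, hANmin⟩
  have hsets : {M : ℝ | 0 ≤ M ∧ ∀ x : D, ‖A x‖ ^ 2 ≤ M * (⟪A x, (x : H)⟫).re} =
      {M : ℝ | 0 ≤ M ∧ ∀ y, ‖AN y‖ ^ 2 ≤ M * (⟪AN y, y⟫).re} := by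
    ext M
    refine and_congr_right fun _ => ⟨h.norm_apply_sq_le, fun hM x => ?_⟩
    simpa only [hANext] using hM x
  rw [hsets, hANpos.isLeast_opNorm.csInf_eq]
end

section
/- Let H = H₀ ⊕ H₀ᗮ be an orthogonal decomposition of a complex Hilbert space, and suppose given bounded operators A₁₁ : H₀ → H₀ with A₁₁ ≥ 0 and A₂₁ : H₀ → H₀ᗮ. If there exists a bounded positive operator B on H whose block matrix has first column (A₁₁, A₂₁) (i.e. B(x ⊕ 0) = A₁₁ x ⊕ A₂₁ x for all x ∈ H₀), then A₂₁* A₂₁ ≤ M · A₁₁ for some constant M ≥ 0. -/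
/-!
Positivity of `B` makes `(u, w) ↦ ⟪B u, w⟫` a semi-inner product on `H`. For `x ∈ H₀` and
`v = A₂₁ x ∈ H₀ᗮ` the block form of `B` gives `⟪B x, v⟫ = ‖v‖²` and `⟪B x, x⟫ = ⟪A₁₁ x, x⟫`,
so Cauchy–Schwarz yields `‖v‖⁴ ≤ ⟪A₁₁ x, x⟫ ⟪B v, v⟫ ≤ ‖B‖ ⟪A₁₁ x, x⟫ ‖v‖²`; thus `M = ‖B‖`.
-/

open scoped ComplexInnerProductSpace

namespace ContinuousLinearMap.IsPositive

open RCLike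

variable {𝕜 E : Type*} [RCLike 𝕜] [NormedAddCommGroup E] [InnerProductSpace 𝕜 E]
  {T : E →L[𝕜] E}

theorem norm_inner_sq_le (hT : T.IsPositive) (x y : E) :
    ‖inner 𝕜 (T x) y‖ ^ 2 ≤ re (inner 𝕜 (T x) x) * re (inner 𝕜 (T y) y) := by
  let core : PreInnerProductSpace.Core 𝕜 E :=
    { inner x y := inner 𝕜 (T x) y
      conj_inner_symm x y := by rw [inner_conj_symm, hT.isSymmetric.apply_clm]
      re_inner_nonneg x := hT.re_inner_nonneg_left x
      add_left x y z := by rw [map_add, inner_add_left]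
      smul_left x y r := by rw [map_smul, inner_smul_left] }
  have key : ‖inner 𝕜 (T x) y‖ * ‖inner 𝕜 (T y) x‖ ≤
      re (inner 𝕜 (T x) x) * re (inner 𝕜 (T y) y) :=
    @InnerProductSpace.Core.inner_mul_inner_self_le 𝕜 E _ _ _ core x y
  rwa [hT.isSymmetric.apply_clm y x, norm_inner_symm y, ← sq] at key

theorem norm_inner_sq_le_opNorm_mul (hT : T.IsPositive) (x y : E) :
    ‖inner 𝕜 (T x) y‖ ^ 2 ≤ ‖T‖ * re (inner 𝕜 (T x) x) * ‖y‖ ^ 2 := by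
  have hy : re (inner 𝕜 (T y) y) ≤ ‖T‖ * ‖y‖ ^ 2 :=
    calc re (inner 𝕜 (T y) y) ≤ ‖T y‖ * ‖y‖ := re_inner_le_norm _ _
      _ ≤ ‖T‖ * ‖y‖ * ‖y‖ := by gcongr; exact T.le_opNorm y
      _ = ‖T‖ * ‖y‖ ^ 2 := by ring
  calc ‖inner 𝕜 (T x) y‖ ^ 2 ≤ re (inner 𝕜 (T x) x) * re (inner 𝕜 (T y) y) :=
        hT.norm_inner_sq_le x y
    _ ≤ re (inner 𝕜 (T x) x) * (‖T‖ * ‖y‖ ^ 2) := by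
        gcongr
        exact hT.re_inner_nonneg_left x
    _ = ‖T‖ * re (inner 𝕜 (T x) x) * ‖y‖ ^ 2 := by ring

end ContinuousLinearMap.IsPositive

theorem stmt11_general {H : Type*} [NormedAddCommGroup H] [InnerProductSpace ℂ H]
    (H0 : Submodule ℂ H)
    (A11 : H0 →L[ℂ] H0)
    (A21 : H0 →L[ℂ] H0ᗮ)
    (B : H →L[ℂ] H)
    (hB : ∀ x : H, (⟪B x, x⟫).im = 0 ∧ 0 ≤ (⟪B x, x⟫).re)
    (hcol : ∀ x : H0, B x = (A11 x : H) + (A21 x : H)) :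
    ∃ M : ℝ, 0 ≤ M ∧ ∀ x : H0, ‖A21 x‖ ^ 2 ≤ M * (⟪A11 x, x⟫).re := by
  have hBpos : B.IsPositive := (B.isPositive_iff_complex).2 fun x =>
    ⟨Complex.ext rfl (by simp [(hB x).1]), (hB x).2⟩
  refine ⟨‖B‖, norm_nonneg B, fun x => ?_⟩
  have hdiag : ⟪B x, x⟫ = ⟪A11 x, x⟫ := by
    rw [hcol, inner_add_left, Submodule.inner_left_of_mem_orthogonal x.2 (A21 x).2, add_zero]
    rfl
  have hoff : ⟪B x, A21 x⟫ = ((‖A21 x‖ ^ 2 : ℝ) : ℂ) := by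
    rw [hcol, inner_add_left, Submodule.inner_right_of_mem_orthogonal (A11 x).2 (A21 x).2,
      zero_add, inner_self_eq_norm_sq_to_K]
    norm_cast
  have hcs := hBpos.norm_inner_sq_le_opNorm_mul (x : H) (A21 x : H)
  have ha : 0 ≤ (⟪A11 x, x⟫).re := hdiag ▸ (hB x).2
  rw [hoff, hdiag, Complex.norm_real, Real.norm_of_nonneg (by positivity),
    ← Submodule.coe_norm, RCLike.re_to_complex] at hcs
  have : 0 ≤ ‖B‖ * (⟪A11 x, x⟫).re := mul_nonneg (norm_nonneg B) ha
  nlinarith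

/-- If a positive operator `B` on `H = H₀ ⊕ H₀ᗮ` has first block column `(A₁₁, A₂₁)`,
then `A₂₁*A₂₁ ≤ M·A₁₁` for some `M ≥ 0`, i.e. `‖A₂₁ x‖² ≤ M ⟨A₁₁ x, x⟩`. -/
theorem stmt11 {H : Type*} [NormedAddCommGroup H] [InnerProductSpace ℂ H] [CompleteSpace H]
    (H0 : Submodule ℂ H) (hc : IsClosed (H0 : Set H))
    (A11 : H0 →L[ℂ] H0)
    (hA11 : ∀ x : H0, (⟪A11 x, x⟫).im = 0 ∧ 0 ≤ (⟪A11 x, x⟫).re)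
    (A21 : H0 →L[ℂ] H0ᗮ)
    (B : H →L[ℂ] H)
    (hB : ∀ x : H, (⟪B x, x⟫).im = 0 ∧ 0 ≤ (⟪B x, x⟫).re)
    (hcol : ∀ x : H0, B x = (A11 x : H) + (A21 x : H)) :
    ∃ M : ℝ, 0 ≤ M ∧ ∀ x : H0, ‖A21 x‖ ^ 2 ≤ M * (⟪A11 x, x⟫).re :=
  stmt11_general H0 A11 A21 B hB hcol
end

section
/- Let H = H₀ ⊕ H₀ᗮ, A₁₁ : H₀ → H₀ bounded positive, A₂₁ : H₀ → H₀ᗮ bounded with A₂₁*A₂₁ ≤ M · A₁₁ for some M ≥ 0. Then there exists a bounded positive operator A₂₂ : H₀ᗮ → H₀ᗮ such that the block operator matrix [[A₁₁, A₂₁*],[A₂₁, A₂₂]] is a positive operator on H. (Halmos' positive completion theorem.) -/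
open scoped ComplexInnerProductSpace

/-! The completion `A₂₂ = M • id` works: by Cauchy–Schwarz the block form is at least
`a - 2bt + Mt²` with `a = re ⟪A₁₁ x, x⟫`, `b = ‖A₂₁ x‖`, `t = ‖y‖`, and this real quadratic in `t`
is nonnegative because its discriminant `4(b² - Ma)` is not positive. -/

/-- If `M > 0` then `M (a - 2bt + Mt²) = (Mt - b)² + (Ma - b²)`; if `M = 0` then `b = 0`. -/
lemma sub_two_mul_add_mul_sq_nonneg {a b t M : ℝ} (hM : 0 ≤ M) (ha : 0 ≤ a) (h : b ^ 2 ≤ M * a) :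
    0 ≤ a - 2 * b * t + M * t ^ 2 := by
  rcases hM.eq_or_lt with rfl | hM
  · have hb : b = 0 := by nlinarith [sq_nonneg b]
    simp [hb, ha]
  · refine nonneg_of_mul_nonneg_right ?_ hM
    nlinarith [sq_nonneg (M * t - b)]

lemma inner_ofReal_smul_self {E : Type*} [NormedAddCommGroup E] [InnerProductSpace ℂ E]
    (M : ℝ) (y : E) : ⟪(M : ℂ) • y, y⟫ = ((M * ‖y‖ ^ 2 : ℝ) : ℂ) := by
  rw [inner_smul_left, Complex.conj_ofReal, inner_self_eq_norm_sq_to_K]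
  push_cast
  rfl

lemma neg_norm_mul_norm_le_re_inner {E : Type*} [NormedAddCommGroup E] [InnerProductSpace ℂ E]
    (u v : E) : -(‖u‖ * ‖v‖) ≤ (⟪u, v⟫).re := by
  have h := re_inner_le_norm (𝕜 := ℂ) u (-v)
  rw [inner_neg_right, map_neg, norm_neg, RCLike.re_to_complex] at h
  exact neg_le.mp h

theorem stmt12_general {H : Type*} [NormedAddCommGroup H] [InnerProductSpace ℂ H]
    (H0 : Submodule ℂ H)
    (A11 : H0 →L[ℂ] H0)
    (hA11 : ∀ x : H0, (⟪A11 x, x⟫).im = 0 ∧ 0 ≤ (⟪A11 x, x⟫).re)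
    (A21 : H0 →L[ℂ] H0ᗮ) (M : ℝ) (hM : 0 ≤ M)
    (hdom : ∀ x : H0, ‖A21 x‖ ^ 2 ≤ M * (⟪A11 x, x⟫).re) :
    ∃ A22 : H0ᗮ →L[ℂ] H0ᗮ,
      (∀ y : H0ᗮ, (⟪A22 y, y⟫).im = 0 ∧ 0 ≤ (⟪A22 y, y⟫).re) ∧
      ∀ (x : H0) (y : H0ᗮ),
        0 ≤ (⟪A11 x, x⟫).re + 2 * (⟪((A21 x : H)), (y : H)⟫).re + (⟪A22 y, y⟫).re := by
  refine ⟨(M : ℂ) • ContinuousLinearMap.id ℂ H0ᗮ, fun y => ?_, fun x y => ?_⟩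
  all_goals simp only [smul_apply, ContinuousLinearMap.id_apply,
    inner_ofReal_smul_self, Complex.ofReal_re, Complex.ofReal_im]
  · exact ⟨trivial, by positivity⟩
  · have hcs : -(‖A21 x‖ * ‖y‖) ≤ _ := neg_norm_mul_norm_le_re_inner (A21 x : H) (y : H)
    have hquad := sub_two_mul_add_mul_sq_nonneg (t := ‖y‖) hM (hA11 x).2 (hdom x)
    linarith

/-- Halmos' positive completion theorem: if `A₂₁*A₂₁ ≤ M·A₁₁`, then the incomplete block
matrix `[[A₁₁, A₂₁*],[A₂₁, *]]` can be completed to a positive operator on `H₀ ⊕ H₀ᗮ`. -/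
theorem stmt12 {H : Type*} [NormedAddCommGroup H] [InnerProductSpace ℂ H] [CompleteSpace H]
    (H0 : Submodule ℂ H) (hc : IsClosed (H0 : Set H))
    (A11 : H0 →L[ℂ] H0)
    (hA11 : ∀ x : H0, (⟪A11 x, x⟫).im = 0 ∧ 0 ≤ (⟪A11 x, x⟫).re)
    (A21 : H0 →L[ℂ] H0ᗮ) (M : ℝ) (hM : 0 ≤ M)
    (hdom : ∀ x : H0, ‖A21 x‖ ^ 2 ≤ M * (⟪A11 x, x⟫).re) :
    ∃ A22 : H0ᗮ →L[ℂ] H0ᗮ,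
      (∀ y : H0ᗮ, (⟪A22 y, y⟫).im = 0 ∧ 0 ≤ (⟪A22 y, y⟫).re) ∧
      ∀ (x : H0) (y : H0ᗮ),
        0 ≤ (⟪A11 x, x⟫).re + 2 * (⟪((A21 x : H)), (y : H)⟫).re + (⟪A22 y, y⟫).re :=
  stmt12_general H0 A11 hA11 A21 M hM hdom
end

section
/- Let H be a complex Hilbert space, D ⊆ H a subspace, A : D → H admitting bounded positive extensions with minimal extension A_N, and let B be a bounded positive operator with A_N ≤ B. Define A_max^B := B − (B − A)_N, where (B−A)_N is the Krein–von Neumann extension of the operator B|_D − A : D → H. Then A_max^B is a positive extension of A with A_max^B ≤ B, and every bounded positive extension à of A with à ≤ B satisfies à ≤ A_max^B. -/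
/-!
If `Ã ≤ B` is a positive extension of `A`, then `B - Ã` is a positive extension of `B|_D - A`,
so minimality of `(B - A)_N` gives `(B - A)_N ≤ B - Ã`, i.e. `Ã ≤ B - (B - A)_N`. Applied to
`Ã = A_N` this also shows that `B - (B - A)_N` dominates the positive operator `A_N`.
-/

open scoped ComplexInnerProductSpace

section

variable {H : Type*} [NormedAddCommGroup H] [InnerProductSpace ℂ H]

lemma IsPosOp.add {S T : H →L[ℂ] H} (hS : IsPosOp S) (hT : IsPosOp T) : IsPosOp (S + T) := by
  intro x
  simp only [add_apply, inner_add_left, Complex.add_im, Complex.add_re]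
  exact ⟨by rw [(hS x).1, (hT x).1, add_zero], add_nonneg (hS x).2 (hT x).2⟩

lemma IsPosOp.of_isPosOp_sub {S T : H →L[ℂ] H} (hS : IsPosOp S) (hTS : IsPosOp (T - S)) :
    IsPosOp T := by
  simpa using hTS.add hS

lemma isPosOp_sub_sub_of_isPosOp_sub {D : Submodule ℂ H} {A : D →ₗ[ℂ] H} {B N T : H →L[ℂ] H}
    (hNmin : ∀ S : H →L[ℂ] H, IsPosOp S → (∀ x : D, S x = B x - A x) → IsPosOp (S - N))
    (hText : ∀ x : D, T x = A x) (hBT : IsPosOp (B - T)) :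
    IsPosOp (B - N - T) := by
  rw [sub_right_comm]
  exact hNmin _ hBT fun x => by simp [hText x]

end

theorem stmt14_general {H : Type*} [NormedAddCommGroup H] [InnerProductSpace ℂ H]
    (D : Submodule ℂ H) (A : D →ₗ[ℂ] H) (AN B BN' : H →L[ℂ] H)
    (hANpos : IsPosOp AN) (hANext : ∀ x : D, AN x = A x)
    (hANB : IsPosOp (B - AN))
    (hBN'pos : IsPosOp BN') (hBN'ext : ∀ x : D, BN' x = B x - A x)
    (hBN'min : ∀ T : H →L[ℂ] H, IsPosOp T → (∀ x : D, T x = B x - A x) →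
      IsPosOp (T - BN')) :
    (∀ x : D, (B - BN') x = A x) ∧ IsPosOp (B - BN') ∧ IsPosOp (B - (B - BN')) ∧
      (∀ Atil : H →L[ℂ] H, IsPosOp Atil → (∀ x : D, Atil x = A x) →
        IsPosOp (B - Atil) → IsPosOp ((B - BN') - Atil)) := by
  refine ⟨fun x => by simp [hBN'ext x], ?_, by rwa [sub_sub_cancel], ?_⟩
  · exact hANpos.of_isPosOp_sub (isPosOp_sub_sub_of_isPosOp_sub hBN'min hANext hANB)
  · exact fun Atil _ hext hle => isPosOp_sub_sub_of_isPosOp_sub hBN'min hext hle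

/-- Existence of the maximal positive extension of `A` bounded above by `B`:
`A_max^B := B − (B−A)_N` is a positive extension of `A`, `A_max^B ≤ B`, and it dominates
every positive extension `Ã ≤ B` of `A`. Here `AN` is the Krein–von Neumann extension of `A`
and `BN'` that of `B|_D − A`. -/
theorem stmt14 {H : Type*} [NormedAddCommGroup H] [InnerProductSpace ℂ H] [CompleteSpace H]
    (D : Submodule ℂ H) (A : D →ₗ[ℂ] H) (AN B BN' : H →L[ℂ] H)
    (hANpos : IsPosOp AN) (hANext : ∀ x : D, AN x = A x)
    (hANmin : ∀ T : H →L[ℂ] H, IsPosOp T → (∀ x : D, T x = A x) → IsPosOp (T - AN))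
    (hBpos : IsPosOp B) (hANB : IsPosOp (B - AN))
    (hBN'pos : IsPosOp BN') (hBN'ext : ∀ x : D, BN' x = B x - A x)
    (hBN'min : ∀ T : H →L[ℂ] H, IsPosOp T → (∀ x : D, T x = B x - A x) →
      IsPosOp (T - BN')) :
    (∀ x : D, (B - BN') x = A x) ∧ IsPosOp (B - BN') ∧ IsPosOp (B - (B - BN')) ∧
      (∀ Atil : H →L[ℂ] H, IsPosOp Atil → (∀ x : D, Atil x = A x) →
        IsPosOp (B - Atil) → IsPosOp ((B - BN') - Atil)) :=
  stmt14_general D A AN B BN' hANpos hANext hANB hBN'pos hBN'ext hBN'min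
end
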